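/- For every problem f :⊆ ℕ^ℕ ⇉ ℕ^ℕ the following are equivalent: (i) DIS ≤_W f; (ii) DIS ≤_sW f; (iii) f is computably discontinuous. -/

import Mathlib

noncomputable section

/-- Baire space `ℕ^ℕ`. -/
abbrev Baire : Type := ℕ → ℕ

/-- The Cantor pairing `⟨n,k⟩ = (n+k)(n+k+1)/2 + k`. -/
def cpair (n k : ℕ) : ℕ := (n + k) * (n + k + 1) / 2 + k

/-- The inverse of the Cantor pairing. -/
noncomputable def cunpair (m : ℕ) : ℕ × ℕ :=
  Classical.epsilon fun x : ℕ × ℕ => cpair x.1 x.2 = m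

/-- A fixed bijective numbering `w : ℕ → List ℕ` of finite words. -/
def word (n : ℕ) : List ℕ := Denumerable.ofNat (List ℕ) n

/-- `l` is a finite prefix of the infinite sequence `p`. -/
def IsPrefixOf (l : List ℕ) (p : Baire) : Prop := l = (List.range l.length).map p

/-- Two words are comparable in the prefix order. -/
def WordComparable (u v : List ℕ) : Prop := u <+: v ∨ v <+: u

/-- The word `w(n_i)` decoded from the `i`-th entry of the code `q`. -/
noncomputable def wn (q : Baire) (i : ℕ) : List ℕ := word (cunpair (q i)).1

/-- The word `w(k_i)` decoded from the `i`-th entry of the code `q`. -/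
noncomputable def wk (q : Baire) (i : ℕ) : List ℕ := word (cunpair (q i)).2

/-- The code `q` is consistent. -/
def ConsistentCode (q : Baire) : Prop :=
  ∀ i j, WordComparable (wn q i) (wn q j) → WordComparable (wk q i) (wk q j)

/-- The continuous partial function `Φ_q :⊆ ℕ^ℕ → ℕ^ℕ` coded by `q`. -/
noncomputable def Phi (q : Baire) : Baire →. Baire := fun p =>
  ⟨ConsistentCode q ∧ ∀ m : ℕ, ∃ i, IsPrefixOf (wn q i) p ∧ m < (wk q i).length,
   fun _ => Classical.epsilon fun x : Baire =>
      ∀ i, IsPrefixOf (wn q i) p → IsPrefixOf (wk q i) x⟩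

/-- The pairing `⟨q,p⟩` on Baire space. -/
def bpair (q p : Baire) : Baire := fun n => if n % 2 = 0 then q (n / 2) else p (n / 2)

/-- Even part of a sequence. -/
def evens (r : Baire) : Baire := fun n => r (2 * n)

/-- Odd part of a sequence. -/
def odds (r : Baire) : Baire := fun n => r (2 * n + 1)

/-- The universal function `U(⟨q,p⟩) = Φ_q(p)`. -/
noncomputable def U : Baire →. Baire := fun r => Phi (evens r) (odds r)

/-- `h` is monotone for the prefix order. -/
def MonotoneWord (h : List ℕ → List ℕ) : Prop := ∀ u v, u <+: v → h u <+: h v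

/-- `h` approximates the partial function `F`. -/
def Approximates (h : List ℕ → List ℕ) (F : Baire →. Baire) : Prop :=
  ∀ p, ∀ hp : (F p).Dom,
    (∀ v, IsPrefixOf v p → IsPrefixOf (h v) ((F p).get hp)) ∧
    (∀ m : ℕ, ∃ v, IsPrefixOf v p ∧ m < (h v).length)

/-- `F :⊆ ℕ^ℕ → ℕ^ℕ` is continuous: some monotone word function approximates it. -/
def ContinuousPF (F : Baire →. Baire) : Prop := ∃ h, MonotoneWord h ∧ Approximates h F

/-- `F :⊆ ℕ^ℕ → ℕ^ℕ` is computable: some computable monotone word function approximates it. -/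
def ComputablePF (F : Baire →. Baire) : Prop :=
  ∃ h, Computable h ∧ MonotoneWord h ∧ Approximates h F

/-- A total function is computable iff it is computable as a partial function with full domain. -/
def ComputableTotal (F : Baire → Baire) : Prop := ComputablePF fun p => Part.some (F p)

/-- A problem (multivalued function on Baire space). -/
abbrev Problem : Type := Baire → Set Baire

/-- `F` is a realizer of the problem `f`. -/
def Realizes (F : Baire →. Baire) (f : Problem) : Prop :=
  ∀ p, (f p).Nonempty → ∃ h : (F p).Dom, (F p).get h ∈ f p

/-- `f` is continuous: it has a continuous realizer. -/
def ContinuousProblem (f : Problem) : Prop := ∃ F, ContinuousPF F ∧ Realizes F f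

/-- The discontinuity problem `DIS`. -/
noncomputable def DIS : Problem := fun p => {q | q ∉ U p}

/-- `D` is a discontinuity function for `f`. -/
def DiscontinuityFunction (D : Baire → Baire) (f : Problem) : Prop :=
  ∀ q, (f (D q)).Nonempty ∧ ∀ y ∈ Phi q (D q), y ∉ f (D q)

/-- `f` is computably discontinuous. -/
def ComputablyDiscontinuous (f : Problem) : Prop :=
  ∃ D, ComputableTotal D ∧ DiscontinuityFunction D f

/-- `f` is effectively discontinuous. -/
def EffectivelyDiscontinuous (f : Problem) : Prop :=
  ∃ D : Baire → Baire, Continuous D ∧ DiscontinuityFunction D f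

/-- Weihrauch reducibility `f ≤_W g`. -/
def WeihrauchRed (f g : Problem) : Prop :=
  ∃ H K : Baire →. Baire, ComputablePF H ∧ ComputablePF K ∧
    ∀ G : Baire →. Baire, Realizes G g →
      Realizes (fun p => (K p).bind fun s => (G s).bind fun t => H (bpair p t)) f

/-- Strong Weihrauch reducibility `f ≤_sW g`. -/
def StrongWeihrauchRed (f g : Problem) : Prop :=
  ∃ H K : Baire →. Baire, ComputablePF H ∧ ComputablePF K ∧
    ∀ G : Baire →. Baire, Realizes G g →
      Realizes (fun p => (K p).bind fun s => (G s).bind fun t => H t) f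

/-- Continuous Weihrauch reducibility `f ≤*_W g`. -/
def ContWeihrauchRed (f g : Problem) : Prop :=
  ∃ H K : Baire →. Baire, ContinuousPF H ∧ ContinuousPF K ∧
    ∀ G : Baire →. Baire, Realizes G g →
      Realizes (fun p => (K p).bind fun s => (G s).bind fun t => H (bpair p t)) f

/-- Continuous strong Weihrauch reducibility `f ≤*_sW g`. -/
def ContStrongWeihrauchRed (f g : Problem) : Prop :=
  ∃ H K : Baire →. Baire, ContinuousPF H ∧ ContinuousPF K ∧
    ∀ G : Baire →. Baire, Realizes G g →
      Realizes (fun p => (K p).bind fun s => (G s).bind fun t => H t) f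

/-- Concatenation of the first `n` moves. -/
def concatN (ms : ℕ → List ℕ) (n : ℕ) : List ℕ := ((List.range n).map ms).flatten

/-- The concatenated play is infinite. -/
def PlayInf (ms : ℕ → List ℕ) : Prop := ∀ m : ℕ, ∃ n, m < (concatN ms n).length

/-- The infinite sequence determined by an infinite play. -/
noncomputable def playLim (ms : ℕ → List ℕ) : Baire :=
  Classical.epsilon fun p : Baire => ∀ n, IsPrefixOf (concatN ms n) p

/-- Player II wins the run of the Wadge game of `f` given by the moves `xs` of I and `ys` of II. -/
def WadgeIIWins (f : Problem) (xs ys : ℕ → List ℕ) : Prop :=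
  (PlayInf xs ∧ (f (playLim xs)).Nonempty) → (PlayInf ys ∧ playLim ys ∈ f (playLim xs))

/-- The list of first `n` moves. -/
def histW (xs : ℕ → List ℕ) (n : ℕ) : List (List ℕ) := (List.range n).map xs

/-- `σ` is a winning strategy for Player II in the Wadge game of `f`. -/
def WadgeWinningII (f : Problem) (σ : List (List ℕ) → List ℕ) : Prop :=
  ∀ xs : ℕ → List ℕ, WadgeIIWins f xs fun i => σ (histW xs (i + 1))

/-- `σ` is a winning strategy for Player I in the Wadge game of `f`. -/
def WadgeWinningI (f : Problem) (σ : List (List ℕ) → List ℕ) : Prop :=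
  ∀ ys : ℕ → List ℕ, ¬ WadgeIIWins f (fun i => σ (histW ys i)) ys

/-- The list of first `n` values of a sequence. -/
def histN (x : Baire) (n : ℕ) : List ℕ := (List.range n).map x

/-- Player II wins the run `(x,y)` of the Lipschitz game of `f`. -/
def LipIIWins (f : Problem) (x y : Baire) : Prop := (f x).Nonempty → y ∈ f x

/-- `σ` is a winning strategy for Player II in the Lipschitz game of `f`. -/
def LipWinningII (f : Problem) (σ : List ℕ → ℕ) : Prop :=
  ∀ x : Baire, LipIIWins f x fun i => σ (histN x (i + 1))

/-- `σ` is a winning strategy for Player I in the Lipschitz game of `f`. -/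
def LipWinningI (f : Problem) (σ : List ℕ → ℕ) : Prop :=
  ∀ y : Baire, ¬ LipIIWins f (fun i => σ (histN y i)) y

/-- `σ` is a winning strategy for Player II in the Gale–Stewart game `A`. -/
def GSWinningII (A : Set Baire) (σ : List ℕ → ℕ) : Prop :=
  ∀ x : Baire, bpair x (fun i => σ (histN x (i + 1))) ∈ A

/-- `σ` is a winning strategy for Player I in the Gale–Stewart game `A`. -/
def GSWinningI (A : Set Baire) (σ : List ℕ → ℕ) : Prop :=
  ∀ y : Baire, bpair (fun i => σ (histN y i)) y ∉ A

/-- The totalization `Tf` of `f`. -/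
def Totalization (f : Problem) : Problem := fun p => {q | (f p).Nonempty → q ∈ f p}

/-- The paired graph `⟨graph(Tf)⟩ ⊆ ℕ^ℕ`. -/
def pairedGraph (f : Problem) : Set Baire :=
  {r | ∃ x y : Baire, r = bpair x y ∧ y ∈ Totalization f x}

/-- Domain of the word concatenation map `w*`. -/
def wstarDom (p : Baire) : Prop := PlayInf fun i => word (p i)

/-- The word concatenation map `w* : p ↦ w(p 0) w(p 1) ⋯` (on its domain). -/
noncomputable def wstar (p : Baire) : Baire := playLim fun i => word (p i)

/-- The problem `f^w = w*⁻¹ ∘ f ∘ w*`. -/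
noncomputable def wordLift (f : Problem) : Problem := fun p =>
  {q | wstarDom p ∧ (f (wstar p)).Nonempty ∧ wstarDom q ∧ wstar q ∈ f (wstar p)}

/-- The `i`-th component of a tupled sequence. -/
def tupleComp (p : Baire) (i : ℕ) : Baire := fun n => p (cpair i n)

/-- The parallelization `⟨f⟩` of `f`. -/
def Parallelization (f : Problem) : Problem := fun p =>
  {q | ∀ i, tupleComp q i ∈ f (tupleComp p i)}

/-- Turing reducibility: `p` is computable relative to the oracle `q`. -/
def TuringLe (p q : Baire) : Prop := ∃ F : Baire →. Baire, ComputablePF F ∧ p ∈ F q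

end



noncomputable section

-- ====== SECTION A : Cantor pairing ======

def cstep (x : ℕ × ℕ) : ℕ × ℕ := if x.1 = 0 then (x.2 + 1, 0) else (x.1 - 1, x.2 + 1)

def cfun (m : ℕ) : ℕ × ℕ := cstep^[m] (0, 0)

def tri (s : ℕ) : ℕ := s * (s + 1) / 2

lemma cpair_eq_tri (n k : ℕ) : cpair n k = tri (n + k) + k := rfl

lemma tri_succ (s : ℕ) : tri (s + 1) = tri s + s + 1 := by
  have h : (s + 1) * (s + 1 + 1) = s * (s + 1) + 2 * (s + 1) := by ring
  simp only [tri, h, Nat.add_mul_div_left _ _ (by norm_num : (0:ℕ) < 2)]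
  omega

lemma cpair_cstep (x : ℕ × ℕ) : cpair (cstep x).1 (cstep x).2 = cpair x.1 x.2 + 1 := by
  obtain ⟨n, k⟩ := x
  rcases Nat.eq_zero_or_pos n with h | h
  · subst h
    have h1 : cstep (0, k) = (k + 1, 0) := by simp [cstep]
    rw [h1]
    simp only [cpair_eq_tri, Nat.add_zero, Nat.zero_add]
    have := tri_succ k
    omega
  · have hn : n ≠ 0 := by omega
    have h1 : cstep (n, k) = (n - 1, k + 1) := by simp [cstep, hn]
    rw [h1]
    simp only [cpair_eq_tri]
    have h2 : n - 1 + (k + 1) = n + k := by omega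
    rw [h2]
    omega

lemma cpair_cfun (m : ℕ) : cpair (cfun m).1 (cfun m).2 = m := by
  induction m with
  | zero => simp [cfun, cpair]
  | succ m ih =>
    have : cfun (m + 1) = cstep (cfun m) := by
      simp [cfun, Function.iterate_succ_apply']
    rw [this, cpair_cstep, ih]

lemma tri_mono : Monotone tri := by
  intro a b h
  induction b with
  | zero => simp_all
  | succ b ih =>
    rcases Nat.lt_or_ge a (b+1) with h' | h'
    · have := ih (by omega)
      rw [tri_succ]; omega
    · have : a = b + 1 := by omega
      subst this; rfl

lemma cpair_injective : ∀ {n k n' k' : ℕ}, cpair n k = cpair n' k' → n = n' ∧ k = k' := by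
  have key : ∀ n k n' k' : ℕ, n + k < n' + k' → cpair n k < cpair n' k' := by
    intro n k n' k' h
    rw [cpair_eq_tri, cpair_eq_tri]
    have h3 : tri (n + k + 1) = tri (n+k) + (n+k) + 1 := tri_succ _
    have h4 : tri (n + k + 1) ≤ tri (n' + k') := tri_mono (by omega)
    omega
  intro n k n' k' h
  have hs : n + k = n' + k' := by
    by_contra hne
    rcases Nat.lt_or_ge (n + k) (n' + k') with h' | h'
    · exact absurd h (Nat.ne_of_lt (key _ _ _ _ h'))
    · exact absurd h.symm (Nat.ne_of_lt (key _ _ _ _ (by omega)))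
  rw [cpair_eq_tri, cpair_eq_tri, hs] at h
  constructor <;> omega

lemma cunpair_eq (m : ℕ) : cunpair m = cfun m := by
  have h : cpair (cunpair m).1 (cunpair m).2 = m :=
    Classical.epsilon_spec (⟨cfun m, cpair_cfun m⟩ : ∃ x : ℕ × ℕ, cpair x.1 x.2 = m)
  have := cpair_injective (h.trans (cpair_cfun m).symm)
  exact Prod.ext this.1 this.2

lemma cunpair_cpair (n k : ℕ) : cunpair (cpair n k) = (n, k) := by
  have h : cpair (cunpair (cpair n k)).1 (cunpair (cpair n k)).2 = cpair n k :=
    Classical.epsilon_spec (⟨(n,k), rfl⟩ : ∃ x : ℕ × ℕ, cpair x.1 x.2 = cpair n k)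
  have := cpair_injective h
  exact Prod.ext this.1 this.2

-- ====== SECTION B : prefixes ======

lemma length_histN (p : Baire) (n : ℕ) : (histN p n).length = n := by simp [histN]

lemma histN_getD {p : Baire} {n i : ℕ} (h : i < n) : (histN p n).getD i 0 = p i := by
  simp [histN, List.getD_eq_getElem?_getD, List.getElem?_map, List.getElem?_range h]

lemma isPrefixOf_iff {l : List ℕ} {p : Baire} :
    IsPrefixOf l p ↔ ∀ i < l.length, l.getD i 0 = p i := by
  constructor
  · intro h i hi
    conv_lhs => rw [h]
    have : i < ((List.range l.length).map p).length := by simpa using hi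
    simp [List.getD_eq_getElem?_getD, List.getElem?_map, List.getElem?_range hi]
  · intro h
    apply List.ext_getElem (by simp)
    intro i h1 h2
    have := h i h1
    simpa [List.getD_eq_getElem, h1, List.getElem_map, List.getElem_range] using this

lemma histN_isPrefixOf (p : Baire) (n : ℕ) : IsPrefixOf (histN p n) p := by
  rw [isPrefixOf_iff]
  intro i hi
  rw [length_histN] at hi
  exact histN_getD hi

lemma isPrefixOf_iff_eq_histN {l : List ℕ} {p : Baire} :
    IsPrefixOf l p ↔ l = histN p l.length := Iff.rfl

lemma prefix_of_getD {u v : List ℕ} (h : u.length ≤ v.length)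
    (hg : ∀ i < u.length, u.getD i 0 = v.getD i 0) : u <+: v := by
  have : u = v.take u.length := by
    apply List.ext_getElem (by simp [h])
    intro i h1 h2
    have := hg i h1
    rw [List.getD_eq_getElem _ _ h1, List.getD_eq_getElem _ _ (by omega)] at this
    simpa [List.getElem_take] using this
  rw [this]
  exact List.take_prefix _ _

lemma IsPrefix.getD_eq {u v : List ℕ} (h : u <+: v) {i : ℕ} (hi : i < u.length) :
    u.getD i 0 = v.getD i 0 := by
  obtain ⟨t, rfl⟩ := h
  rw [List.getD_eq_getElem _ _ hi, List.getD_eq_getElem _ _ (by simp; omega)]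
  simp [List.getElem_append_left hi]

lemma IsPrefixOf.mono {u l : List ℕ} {p : Baire} (h : u <+: l) (hl : IsPrefixOf l p) :
    IsPrefixOf u p := by
  rw [isPrefixOf_iff] at hl ⊢
  intro i hi
  rw [IsPrefix.getD_eq h hi]
  exact hl i (by have := h.length_le; omega)

lemma prefix_of_isPrefixOf {u v : List ℕ} {p : Baire} (hu : IsPrefixOf u p)
    (hv : IsPrefixOf v p) (h : u.length ≤ v.length) : u <+: v := by
  rw [isPrefixOf_iff] at hu hv
  exact prefix_of_getD h (fun i hi => by rw [hu i hi, hv i (by omega)])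

lemma wordComparable_of_isPrefixOf {u v : List ℕ} {p : Baire} (hu : IsPrefixOf u p)
    (hv : IsPrefixOf v p) : WordComparable u v := by
  rcases Nat.le_or_ge u.length v.length with h | h
  · exact Or.inl (prefix_of_isPrefixOf hu hv h)
  · exact Or.inr (prefix_of_isPrefixOf hv hu h)

lemma baire_eq_of_unbounded_common_prefix {x y : Baire}
    (h : ∀ m : ℕ, ∃ l : List ℕ, IsPrefixOf l x ∧ IsPrefixOf l y ∧ m < l.length) : x = y := by
  funext n
  obtain ⟨l, hx, hy, hn⟩ := h n
  rw [isPrefixOf_iff] at hx hy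
  rw [← hx n hn, hy n hn]

-- ====== SECTION C : Phi characterization ======

def PhiDomP (q p : Baire) : Prop :=
  ConsistentCode q ∧ ∀ m : ℕ, ∃ i, IsPrefixOf (wn q i) p ∧ m < (wk q i).length

def PhiSpec (q p x : Baire) : Prop := ∀ i, IsPrefixOf (wn q i) p → IsPrefixOf (wk q i) x

lemma Phi_dom_iff {q p : Baire} : (Phi q p).Dom ↔ PhiDomP q p := Iff.rfl

lemma wk_comparable {q p : Baire} (hc : ConsistentCode q) {i j : ℕ}
    (hi : IsPrefixOf (wn q i) p) (hj : IsPrefixOf (wn q j) p) :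
    WordComparable (wk q i) (wk q j) :=
  hc i j (wordComparable_of_isPrefixOf hi hj)

lemma exists_phiSpec {q p : Baire} (h : PhiDomP q p) : ∃ x, PhiSpec q p x := by
  classical
  refine ⟨fun n => (wk q (h.2 n).choose).getD n 0, ?_⟩
  intro i hi
  rw [isPrefixOf_iff]
  intro n hn
  set j := (h.2 n).choose with hj
  obtain ⟨hjp, hjl⟩ := (h.2 n).choose_spec
  have hcomp := wk_comparable h.1 hi hjp
  rcases hcomp with hc | hc
  · exact (IsPrefix.getD_eq hc hn)
  · exact (IsPrefix.getD_eq hc (by omega)).symm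

lemma phiSpec_unique {q p x y : Baire} (h : PhiDomP q p)
    (hx : PhiSpec q p x) (hy : PhiSpec q p y) : x = y := by
  apply baire_eq_of_unbounded_common_prefix
  intro m
  obtain ⟨i, hip, hil⟩ := h.2 m
  exact ⟨wk q i, hx i hip, hy i hip, hil⟩

lemma Phi_get_spec {q p : Baire} (h : (Phi q p).Dom) :
    PhiSpec q p ((Phi q p).get h) :=
  Classical.epsilon_spec (exists_phiSpec (Phi_dom_iff.1 h))

lemma mem_Phi_iff {q p y : Baire} : y ∈ Phi q p ↔ PhiDomP q p ∧ PhiSpec q p y := by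
  constructor
  · rintro ⟨h, rfl⟩
    exact ⟨Phi_dom_iff.1 h, Phi_get_spec h⟩
  · rintro ⟨hd, hs⟩
    refine ⟨hd, ?_⟩
    exact (phiSpec_unique hd (Phi_get_spec hd) hs)

lemma evens_bpair (q p : Baire) : evens (bpair q p) = q := by
  funext n; simp [evens, bpair, Nat.mul_div_cancel_left _ (by norm_num : 0 < 2), Nat.mul_mod_right]

lemma odds_bpair (q p : Baire) : odds (bpair q p) = p := by
  funext n
  simp only [odds, bpair]
  have h1 : (2 * n + 1) % 2 = 1 := by omega
  have h2 : (2 * n + 1) / 2 = n := by omega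
  simp [h1, h2]

lemma bpair_evens_odds (r : Baire) : bpair (evens r) (odds r) = r := by
  funext n
  simp only [bpair, evens, odds]
  rcases Nat.even_or_odd n with h | h
  · obtain ⟨k, rfl⟩ := h
    have : k + k = 2 * k := by ring
    rw [this]
    simp [Nat.mul_div_cancel_left _ (by norm_num : 0 < 2), Nat.mul_mod_right]
  · obtain ⟨k, rfl⟩ := h
    have h1 : (2 * k + 1) % 2 = 1 := by omega
    have h2 : (2 * k + 1) / 2 = k := by omega
    simp [h1, h2]

lemma U_bpair (q p : Baire) : U (bpair q p) = Phi q p := by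
  simp [U, evens_bpair, odds_bpair]

lemma mem_U_iff {r y : Baire} : y ∈ U r ↔ PhiDomP (evens r) (odds r) ∧ PhiSpec (evens r) (odds r) y :=
  mem_Phi_iff

lemma DIS_aux_nonempty (p : Baire) : ∃ y : Baire, y ∉ U p := by
  by_cases h : (U p).Dom
  · refine ⟨fun n => (U p).get h n + 1, ?_⟩
    intro hmem
    have : (U p).get h = fun n => (U p).get h n + 1 := Part.mem_unique ⟨h, rfl⟩ hmem
    have := congrFun this 0
    omega
  · exact ⟨fun _ => 0, fun hmem => h hmem.1⟩

-- ====== list machinery ======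

def myTake (n : ℕ) (l : List ℕ) : List ℕ := (List.range n).map (fun i => l.getD i 0)
def evensL (l : List ℕ) : List ℕ := (List.range ((l.length + 1) / 2)).map (fun i => l.getD (2*i) 0)
def oddsL (l : List ℕ) : List ℕ := (List.range (l.length / 2)).map (fun i => l.getD (2*i+1) 0)
def interL (u w : List ℕ) : List ℕ :=
  (List.range (2 * min u.length w.length)).map
    (fun n => if n % 2 = 0 then u.getD (n/2) 0 else w.getD (n/2) 0)

lemma mapRange_length {f : ℕ → ℕ} {n : ℕ} : ((List.range n).map f).length = n := by simp

lemma mapRange_getD {f : ℕ → ℕ} {n i : ℕ} (h : i < n) :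
    ((List.range n).map f).getD i 0 = f i := by
  simp [List.getD_eq_getElem?_getD, List.getElem?_map, List.getElem?_range h]

lemma mapRange_mono {f : ℕ → ℕ} {m n : ℕ} (h : m ≤ n) :
    (List.range m).map f <+: (List.range n).map f := by
  apply prefix_of_getD (by simpa using h)
  intro i hi
  rw [mapRange_length] at hi
  rw [mapRange_getD hi, mapRange_getD (by omega)]

lemma histN_mono {p : Baire} {m n : ℕ} (h : m ≤ n) : histN p m <+: histN p n :=
  mapRange_mono h

lemma myTake_length {n : ℕ} {l : List ℕ} : (myTake n l).length = n := mapRange_length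

lemma myTake_getD {n i : ℕ} {l : List ℕ} (h : i < n) : (myTake n l).getD i 0 = l.getD i 0 :=
  mapRange_getD h

lemma myTake_eq_histN {v : List ℕ} {p : Baire} (hv : IsPrefixOf v p) {n : ℕ} (hn : n ≤ v.length) :
    myTake n v = histN p n := by
  apply List.ext_getElem (by simp [myTake, histN])
  intro i h1 h2
  rw [← List.getD_eq_getElem _ 0 h1, ← List.getD_eq_getElem _ 0 h2,
    myTake_getD (by simpa [myTake] using h1), histN_getD (by simpa [histN] using h2)]
  exact (isPrefixOf_iff.1 hv) i (by simp [myTake] at h1; omega)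

lemma myTake_congr_prefix {u v : List ℕ} (h : u <+: v) {n : ℕ} (hn : n ≤ u.length) :
    myTake n u = myTake n v := by
  apply List.ext_getElem (by simp [myTake])
  intro i h1 h2
  rw [← List.getD_eq_getElem _ 0 h1, ← List.getD_eq_getElem _ 0 h2,
    myTake_getD (by simpa [myTake] using h1), myTake_getD (by simpa [myTake] using h2)]
  exact IsPrefix.getD_eq h (by simp [myTake] at h1; omega)

-- evensL/oddsL

lemma evensL_length {l : List ℕ} : (evensL l).length = (l.length + 1) / 2 := by simp [evensL]

lemma oddsL_length {l : List ℕ} : (oddsL l).length = l.length / 2 := by simp [oddsL]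

lemma evensL_isPrefixOf {v : List ℕ} {r : Baire} (h : IsPrefixOf v r) :
    IsPrefixOf (evensL v) (evens r) := by
  rw [isPrefixOf_iff]
  intro i hi
  rw [evensL_length] at hi
  rw [show (evensL v).getD i 0 = v.getD (2*i) 0 from mapRange_getD hi]
  rw [(isPrefixOf_iff.1 h) (2*i) (by omega)]
  rfl

lemma oddsL_isPrefixOf {v : List ℕ} {r : Baire} (h : IsPrefixOf v r) :
    IsPrefixOf (oddsL v) (odds r) := by
  rw [isPrefixOf_iff]
  intro i hi
  rw [oddsL_length] at hi
  rw [show (oddsL v).getD i 0 = v.getD (2*i+1) 0 from mapRange_getD hi]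
  rw [(isPrefixOf_iff.1 h) (2*i+1) (by omega)]
  rfl

lemma evensL_mono {u v : List ℕ} (h : u <+: v) : evensL u <+: evensL v := by
  apply prefix_of_getD (by rw [evensL_length, evensL_length]; have := h.length_le; omega)
  intro i hi
  rw [evensL_length] at hi
  rw [show (evensL u).getD i 0 = u.getD (2*i) 0 from mapRange_getD hi,
    show (evensL v).getD i 0 = v.getD (2*i) 0 from
      mapRange_getD (by have := h.length_le; omega)]
  exact IsPrefix.getD_eq h (by omega)

lemma oddsL_mono {u v : List ℕ} (h : u <+: v) : oddsL u <+: oddsL v := by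
  apply prefix_of_getD (by rw [oddsL_length, oddsL_length]; have := h.length_le; omega)
  intro i hi
  rw [oddsL_length] at hi
  rw [show (oddsL u).getD i 0 = u.getD (2*i+1) 0 from mapRange_getD hi,
    show (oddsL v).getD i 0 = v.getD (2*i+1) 0 from
      mapRange_getD (by have := h.length_le; omega)]
  exact IsPrefix.getD_eq h (by omega)

-- interL

lemma interL_length {u w : List ℕ} : (interL u w).length = 2 * min u.length w.length := by
  simp [interL]

lemma interL_getD_even {u w : List ℕ} {i : ℕ} (h : i < min u.length w.length) :
    (interL u w).getD (2*i) 0 = u.getD i 0 := by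
  have h2 : 2*i < 2 * min u.length w.length := by omega
  rw [show (interL u w).getD (2*i) 0 = _ from mapRange_getD h2]
  simp [Nat.mul_mod_right, Nat.mul_div_cancel_left _ (by norm_num : 0 < 2)]

lemma interL_getD_odd {u w : List ℕ} {i : ℕ} (h : i < min u.length w.length) :
    (interL u w).getD (2*i+1) 0 = w.getD i 0 := by
  have h2 : 2*i+1 < 2 * min u.length w.length := by omega
  rw [show (interL u w).getD (2*i+1) 0 = _ from mapRange_getD h2]
  have h3 : (2*i+1) % 2 = 1 := by omega
  have h4 : (2*i+1) / 2 = i := by omega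
  simp [h3, h4]

lemma interL_isPrefixOf {u w : List ℕ} {q p : Baire} (hu : IsPrefixOf u q)
    (hw : IsPrefixOf w p) : IsPrefixOf (interL u w) (bpair q p) := by
  rw [isPrefixOf_iff]
  intro i hi
  rw [interL_length] at hi
  rcases Nat.even_or_odd i with ⟨j, rfl⟩ | ⟨j, rfl⟩
  · have hj : j < min u.length w.length := by omega
    rw [show j + j = 2 * j by ring] at *
    rw [interL_getD_even hj, (isPrefixOf_iff.1 hu) j (by omega)]
    simp [bpair, Nat.mul_mod_right, Nat.mul_div_cancel_left _ (by norm_num : 0 < 2)]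
  · have hj : j < min u.length w.length := by omega
    rw [interL_getD_odd hj, (isPrefixOf_iff.1 hw) j (by omega)]
    have h3 : (2*j+1) % 2 = 1 := by omega
    have h4 : (2*j+1) / 2 = j := by omega
    simp [bpair, h3, h4]

lemma interL_mono {u u' w w' : List ℕ} (hu : u <+: u') (hw : w <+: w') :
    interL u w <+: interL u' w' := by
  have h1 := hu.length_le
  have h2 := hw.length_le
  apply prefix_of_getD (by rw [interL_length, interL_length]; omega)
  intro i hi
  rw [interL_length] at hi
  rcases Nat.even_or_odd i with ⟨j, rfl⟩ | ⟨j, rfl⟩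
  · have hj : j < min u.length w.length := by omega
    rw [show j + j = 2 * j by ring] at *
    rw [interL_getD_even hj, interL_getD_even (by omega)]
    exact IsPrefix.getD_eq hu (by omega)
  · have hj : j < min u.length w.length := by omega
    rw [interL_getD_odd hj, interL_getD_odd (by omega)]
    exact IsPrefix.getD_eq hw (by omega)

lemma histN_bpair {q p : Baire} {n : ℕ} :
    histN (bpair q p) (2*n) = interL (histN q n) (histN p n) := by
  apply List.ext_getElem (by simp [histN, interL_length])
  intro i h1 h2
  rw [← List.getD_eq_getElem _ 0 h1, ← List.getD_eq_getElem _ 0 h2]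
  have hi : i < 2 * n := by simpa [histN] using h1
  rw [histN_getD hi]
  rcases Nat.even_or_odd i with ⟨j, rfl⟩ | ⟨j, rfl⟩
  · rw [show j + j = 2 * j by ring] at *
    rw [interL_getD_even (by simp [length_histN]; omega), histN_getD (by omega)]
    simp [bpair, Nat.mul_mod_right, Nat.mul_div_cancel_left _ (by norm_num : 0 < 2)]
  · rw [interL_getD_odd (by simp [length_histN]; omega), histN_getD (by omega)]
    have h3 : (2*j+1) % 2 = 1 := by omega
    have h4 : (2*j+1) / 2 = j := by omega
    simp [bpair, h3, h4]


-- ====== Primrec facts ======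

open Primrec in
lemma primrec_getD0 : Primrec₂ (fun (l : List ℕ) (i : ℕ) => l.getD i 0) :=
  Primrec.list_getD 0

open Primrec in
lemma primrec_cpair : Primrec₂ cpair := by
  unfold cpair
  exact Primrec₂.comp₂ nat_add
    (Primrec₂.comp₂ nat_div
      (Primrec₂.comp₂ nat_mul (Primrec₂.comp₂ nat_add Primrec₂.left Primrec₂.right)
        (Primrec₂.comp₂ nat_add (Primrec₂.comp₂ nat_add Primrec₂.left Primrec₂.right)
          (Primrec₂.const 1)))
      (Primrec₂.const 2)) Primrec₂.right

open Primrec in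
lemma primrec_cstep : Primrec cstep := by
  unfold cstep
  exact Primrec.ite (Primrec.eq.comp fst (const 0))
    (Primrec.pair (succ.comp snd) (const 0))
    (Primrec.pair (pred.comp fst) (succ.comp snd))

open Primrec in
lemma primrec_cfun : Primrec cfun := by
  have h : Primrec (fun m => Nat.rec (motive := fun _ => ℕ × ℕ) ((0,0) : ℕ × ℕ)
      (fun _ IH => cstep IH) m) :=
    Primrec.nat_rec₁ _ (primrec_cstep.comp snd).to₂
  exact h.of_eq (fun m => by
    induction m with
    | zero => rfl
    | succ m ih => simp only [cfun, Function.iterate_succ_apply'] at *; rw [← ih])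

lemma primrec_word : Primrec word := Primrec.ofNat (List ℕ)

lemma primrec_encodeL : Primrec (fun l : List ℕ => Encodable.encode l) := Primrec.encode

lemma word_encode (l : List ℕ) : word (Encodable.encode l) = l := by
  simp [word]

open Primrec in
lemma primrec_myTake : Primrec₂ myTake := by
  unfold myTake
  exact (Primrec.list_map (list_range.comp fst)
    ((primrec_getD0.comp (snd.comp fst) snd).to₂)).to₂

open Primrec in
lemma primrec_evensL : Primrec evensL := by
  unfold evensL
  exact Primrec.list_map
    (list_range.comp (nat_div.comp (succ.comp list_length) (const 2)))
    (primrec_getD0.comp fst (nat_mul.comp (const 2) snd)).to₂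

open Primrec in
lemma primrec_oddsL : Primrec oddsL := by
  unfold oddsL
  exact Primrec.list_map
    (list_range.comp (nat_div.comp list_length (const 2)))
    (primrec_getD0.comp fst (succ.comp (nat_mul.comp (const 2) snd))).to₂

open Primrec in
lemma primrec_interL : Primrec₂ interL := by
  unfold interL
  exact (Primrec.list_map
    (list_range.comp (nat_mul.comp (const 2)
      (Primrec.nat_min.comp (list_length.comp fst) (list_length.comp snd))))
    (Primrec.ite
      (Primrec.eq.comp (nat_mod.comp snd (const 2)) (const 0))
      (primrec_getD0.comp (fst.comp fst) (nat_div.comp snd (const 2)))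
      (primrec_getD0.comp (snd.comp fst) (nat_div.comp snd (const 2)))).to₂).to₂

open Computable in
lemma computable_mapRange {α : Type} [Primcodable α] {g : α → ℕ → ℕ} (hg : Computable₂ g) :
    Computable₂ (fun (a : α) (n : ℕ) => (List.range n).map (g a)) := by
  have h := Computable.nat_rec (f := fun p : α × ℕ => p.2)
    (g := fun _ : α × ℕ => ([] : List ℕ))
    (h := fun (p : α × ℕ) (q : ℕ × List ℕ) => q.2 ++ [g p.1 q.1])
    Computable.snd (Computable.const [])
    (Computable.list_concat.comp (snd.comp snd) (hg.comp (fst.comp fst) (fst.comp snd))).to₂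
  have h2 : Computable (fun p : α × ℕ => (List.range p.2).map (g p.1)) := by
    refine h.of_eq (fun p => ?_)
    obtain ⟨a, n⟩ := p
    induction n with
    | zero => rfl
    | succ n ih =>
      show (Nat.rec [] (fun y IH => IH ++ [g a y]) n : List ℕ) ++ [g a n] = _
      rw [ih, List.range_succ, List.map_append]
      rfl
  exact h2.to₂

-- ====== Approximates via mem ======

lemma approx_mem {h : List ℕ → List ℕ} {F : Baire →. Baire} (ha : Approximates h F)
    {p y : Baire} (hy : y ∈ F p) :
    (∀ v, IsPrefixOf v p → IsPrefixOf (h v) y) ∧ (∀ m : ℕ, ∃ v, IsPrefixOf v p ∧ m < (h v).length) := by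
  obtain ⟨hd, hget⟩ := hy
  obtain ⟨h1, h2⟩ := ha p hd
  exact ⟨fun v hv => hget ▸ h1 v hv, h2⟩

lemma computablePF_congr {F G : Baire →. Baire} (h : ∀ p, F p = G p) (hF : ComputablePF F) :
    ComputablePF G := by
  have : F = G := funext h
  rwa [← this]

-- ====== ComputablePF algebra ======

lemma ComputablePF.bindPF {F G : Baire →. Baire} (hF : ComputablePF F) (hG : ComputablePF G) :
    ComputablePF (fun p => (F p).bind G) := by
  obtain ⟨hf, hfc, hfm, hfa⟩ := hF
  obtain ⟨hg, hgc, hgm, hga⟩ := hG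
  refine ⟨fun v => hg (hf v), hgc.comp hfc, fun u v h => hgm _ _ (hfm _ _ h), ?_⟩
  intro p hp
  have hy : ((fun p => (F p).bind G) p).get hp ∈ (F p).bind G := Part.get_mem hp
  replace hy := Part.mem_bind_iff.mp hy
  obtain ⟨s, hs, hy⟩ := hy
  obtain ⟨hf1, hf2⟩ := approx_mem hfa hs
  obtain ⟨hg1, hg2⟩ := approx_mem hga hy
  constructor
  · intro v hv
    exact hg1 _ (hf1 v hv)
  · intro m
    obtain ⟨u, hu, hul⟩ := hg2 m
    obtain ⟨v, hv, hvl⟩ := hf2 u.length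
    have hcomp : u <+: hf v := prefix_of_isPrefixOf hu (hf1 v hv) (by omega)
    refine ⟨v, hv, ?_⟩
    show m < (hg (hf v)).length
    have := (hgm _ _ hcomp).length_le
    omega

lemma ComputablePF.precompTotal {F : Baire →. Baire} {T : Baire → Baire}
    (hF : ComputablePF F) (hT : ComputableTotal T) : ComputablePF (fun p => F (T p)) := by
  have := ComputablePF.bindPF hT hF
  exact computablePF_congr (fun p => Part.bind_some _ _) this

lemma ComputableTotal.comp {T S : Baire → Baire} (hS : ComputableTotal S)
    (hT : ComputableTotal T) : ComputableTotal (fun p => S (T p)) :=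
  ComputablePF.precompTotal (F := fun p => Part.some (S p)) hS hT

-- map-pair lemmas
lemma ComputablePF.mapPairRight {F : Baire →. Baire} {T : Baire → Baire}
    (hF : ComputablePF F) (hT : ComputableTotal T) :
    ComputablePF (fun p => (F p).map (fun t => bpair (T p) t)) := by
  obtain ⟨hf, hfc, hfm, hfa⟩ := hF
  obtain ⟨ht, htc, htm, hta⟩ := hT
  refine ⟨fun v => interL (ht v) (hf v), ?_, fun u v h => interL_mono (htm _ _ h) (hfm _ _ h), ?_⟩
  · exact primrec_interL.to_comp.comp htc hfc
  · intro p hp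
    have hy := Part.get_mem hp
    rw [Part.mem_map_iff] at hy
    obtain ⟨t, ht', hval⟩ := hy
    obtain ⟨hf1, hf2⟩ := approx_mem hfa ht'
    obtain ⟨ht1, ht2⟩ := approx_mem hta (Part.mem_some (T p))
    constructor
    · intro v hv
      rw [← hval]
      exact interL_isPrefixOf (ht1 v hv) (hf1 v hv)
    · intro m
      obtain ⟨v1, hv1, hl1⟩ := ht2 m
      obtain ⟨v2, hv2, hl2⟩ := hf2 m
      rcases Nat.le_or_ge v1.length v2.length with h | h
      · refine ⟨v2, hv2, ?_⟩
        have hp12 : v1 <+: v2 := prefix_of_isPrefixOf hv1 hv2 h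
        have := (htm _ _ hp12).length_le
        rw [interL_length]
        omega
      · refine ⟨v1, hv1, ?_⟩
        have hp21 : v2 <+: v1 := prefix_of_isPrefixOf hv2 hv1 h
        have := (hfm _ _ hp21).length_le
        rw [interL_length]
        omega

lemma ComputablePF.mapPairLeft {F : Baire →. Baire} {T : Baire → Baire}
    (hF : ComputablePF F) (hT : ComputableTotal T) :
    ComputablePF (fun p => (F p).map (fun t => bpair t (T p))) := by
  obtain ⟨hf, hfc, hfm, hfa⟩ := hF
  obtain ⟨ht, htc, htm, hta⟩ := hT
  refine ⟨fun v => interL (hf v) (ht v), primrec_interL.to_comp.comp hfc htc,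
    fun u v h => interL_mono (hfm _ _ h) (htm _ _ h), ?_⟩
  intro p hp
  have hy := Part.get_mem hp
  rw [Part.mem_map_iff] at hy
  obtain ⟨t, ht', hval⟩ := hy
  obtain ⟨hf1, hf2⟩ := approx_mem hfa ht'
  obtain ⟨ht1, ht2⟩ := approx_mem hta (Part.mem_some (T p))
  constructor
  · intro v hv
    rw [← hval]
    exact interL_isPrefixOf (hf1 v hv) (ht1 v hv)
  · intro m
    obtain ⟨v1, hv1, hl1⟩ := ht2 m
    obtain ⟨v2, hv2, hl2⟩ := hf2 m
    rcases Nat.le_or_ge v1.length v2.length with h | h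
    · refine ⟨v2, hv2, ?_⟩
      have hp12 : v1 <+: v2 := prefix_of_isPrefixOf hv1 hv2 h
      have := (htm _ _ hp12).length_le
      rw [interL_length]
      omega
    · refine ⟨v1, hv1, ?_⟩
      have hp21 : v2 <+: v1 := prefix_of_isPrefixOf hv2 hv1 h
      have := (hfm _ _ hp21).length_le
      rw [interL_length]
      omega

-- total building blocks

lemma ct_id : ComputableTotal (fun p : Baire => p) := by
  refine ⟨id, Computable.id, fun u v h => h, ?_⟩
  intro p _
  constructor
  · intro v hv; exact hv
  · intro m; exact ⟨histN p (m+1), histN_isPrefixOf p (m+1), by simp [histN]⟩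

lemma ct_evens : ComputableTotal evens := by
  refine ⟨evensL, primrec_evensL.to_comp, fun u v h => evensL_mono h, ?_⟩
  intro p _
  constructor
  · intro v hv; exact evensL_isPrefixOf hv
  · intro m
    refine ⟨histN p (2*(m+1)), histN_isPrefixOf _ _, ?_⟩
    rw [evensL_length, length_histN]
    omega

lemma ct_odds : ComputableTotal odds := by
  refine ⟨oddsL, primrec_oddsL.to_comp, fun u v h => oddsL_mono h, ?_⟩
  intro p _
  constructor
  · intro v hv; exact oddsL_isPrefixOf hv
  · intro m
    refine ⟨histN p (2*(m+1)), histN_isPrefixOf _ _, ?_⟩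
    rw [oddsL_length, length_histN]
    omega

lemma ct_bpair {T1 T2 : Baire → Baire} (h1 : ComputableTotal T1) (h2 : ComputableTotal T2) :
    ComputableTotal (fun p => bpair (T1 p) (T2 p)) := by
  have := ComputablePF.mapPairRight h2 h1
  exact computablePF_congr (fun p => by simp [Part.map_some]) this

lemma ct_const {c : ℕ → ℕ} (hc : Computable c) : ComputableTotal (fun _ : Baire => (c : Baire)) := by
  refine ⟨fun v => histN c v.length, ?_, ?_, ?_⟩
  · exact (computable_mapRange (g := fun (_ : List ℕ) n => c n)
      ((hc.comp Computable.snd).to₂)).comp Computable.id Computable.list_length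
  · intro u v h
    exact histN_mono h.length_le
  · intro p _
    constructor
    · intro v _; exact histN_isPrefixOf c v.length
    · intro m
      exact ⟨histN p (m+1), histN_isPrefixOf p (m+1), by rw [length_histN, length_histN]; omega⟩



-- ====== mBound ======

def wordOkB (L m : ℕ) : Bool := (List.range m).all (fun i => decide ((word i).length ≤ L))

lemma wordOkB_iff {L m : ℕ} : wordOkB L m = true ↔ ∀ i < m, (word i).length ≤ L := by
  simp [wordOkB, List.all_eq_true]

def mBound (L : ℕ) : ℕ := Nat.findGreatest (fun m => wordOkB L m = true) (L + 1)

lemma mBound_spec {L : ℕ} : ∀ i < mBound L, (word i).length ≤ L := by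
  have h : wordOkB L (mBound L) = true :=
    Nat.findGreatest_spec (P := fun m => wordOkB L m = true) (m := 0)
      (by omega) (by simp [wordOkB])
  exact wordOkB_iff.1 h

lemma mBound_mono {L L' : ℕ} (h : L ≤ L') : mBound L ≤ mBound L' := by
  apply Nat.le_findGreatest
  · exact le_trans (Nat.findGreatest_le _) (by omega)
  · rw [wordOkB_iff]
    intro i hi
    exact le_trans (mBound_spec i hi) h

lemma exists_word_length_bound (M : ℕ) : ∃ C, ∀ i < M, (word i).length ≤ C := by
  induction M with
  | zero => exact ⟨0, by omega⟩
  | succ M ih =>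
    obtain ⟨C, hC⟩ := ih
    refine ⟨max C (word M).length, fun i hi => ?_⟩
    rcases Nat.lt_or_ge i M with h | h
    · exact le_trans (hC i h) (le_max_left _ _)
    · have : i = M := by omega
      subst this
      exact le_max_right _ _

lemma mBound_large (M : ℕ) : ∃ L0, ∀ L, L0 ≤ L → M ≤ mBound L := by
  obtain ⟨C, hC⟩ := exists_word_length_bound M
  refine ⟨max M C, fun L hL => ?_⟩
  apply Nat.le_findGreatest (by omega)
  rw [wordOkB_iff]
  intro i hi
  have := hC i hi
  omega

open Primrec in
lemma primrec_wordOkB : Primrec₂ wordOkB := by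
  have hstep : Primrec₂ (fun (p : ℕ × ℕ) (q : ℕ × Bool) =>
      (decide ((word q.1).length ≤ p.1) && q.2 : Bool)) := by
    have h1 : Primrec (fun (x : (ℕ × ℕ) × ℕ × Bool) => (decide ((word x.2.1).length ≤ x.1.1) : Bool)) :=
      PrimrecPred.decide (PrimrecRel.comp nat_le (list_length.comp (primrec_word.comp (fst.comp snd))) (fst.comp fst))
    exact (Primrec.dom_bool₂ (· && ·)).comp h1 (snd.comp snd)
  have h : Primrec (fun p : ℕ × ℕ =>
      (List.range p.2).foldr (fun i b => (decide ((word i).length ≤ p.1) && b : Bool)) true) :=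
    Primrec.list_foldr (list_range.comp snd) (const true) hstep
  refine h.of_eq (fun p => ?_)
  show _ = wordOkB p.1 p.2
  unfold wordOkB
  generalize (List.range p.2) = l
  induction l with
  | nil => rfl
  | cons x l ih => simp [List.all_cons, ih]

open Primrec in
lemma primrec_mBound : Primrec mBound := by
  have hrel : PrimrecRel (fun (L m : ℕ) => wordOkB L m = true) :=
    Primrec₂.primrecRel (Primrec.of_eq primrec_wordOkB (fun p => by simp))
  exact Primrec.nat_findGreatest succ hrel

-- ====== codeOf / smn ======

def codeOf (h : List ℕ → List ℕ) (a : Baire) : Baire :=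
  fun i => cpair i (Encodable.encode (h (interL (histN a (word i).length) (word i))))

lemma wn_codeOf {h a i} : wn (codeOf h a) i = word i := by
  simp [wn, codeOf, cunpair_cpair]

lemma wk_codeOf {h a i} :
    wk (codeOf h a) i = h (interL (histN a (word i).length) (word i)) := by
  simp [wk, codeOf, cunpair_cpair, word_encode]

lemma codeOf_wk_mono {h a i j} (hm : MonotoneWord h) (hij : word i <+: word j) :
    wk (codeOf h a) i <+: wk (codeOf h a) j := by
  rw [wk_codeOf, wk_codeOf]
  exact hm _ _ (interL_mono (histN_mono hij.length_le) hij)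

lemma codeOf_consistent {h a} (hm : MonotoneWord h) : ConsistentCode (codeOf h a) := by
  intro i j hcomp
  rw [wn_codeOf, wn_codeOf] at hcomp
  rcases hcomp with hc | hc
  · exact Or.inl (codeOf_wk_mono hm hc)
  · exact Or.inr (codeOf_wk_mono hm hc)

lemma codeOf_spec {h : List ℕ → List ℕ} {F : Baire →. Baire} (hm : MonotoneWord h)
    (ha : Approximates h F) {a x y : Baire} (hy : y ∈ F (bpair a x)) :
    y ∈ Phi (codeOf h a) x := by
  obtain ⟨h1, h2⟩ := approx_mem ha hy
  rw [mem_Phi_iff]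
  refine ⟨⟨codeOf_consistent hm, ?_⟩, ?_⟩
  · intro m
    obtain ⟨v, hv, hvl⟩ := h2 m
    have hv' : IsPrefixOf (histN (bpair a x) (2 * v.length)) (bpair a x) := histN_isPrefixOf _ _
    have hvv' : v <+: histN (bpair a x) (2 * v.length) :=
      prefix_of_isPrefixOf hv hv' (by rw [length_histN]; omega)
    refine ⟨Encodable.encode (histN x v.length), ?_, ?_⟩
    · rw [wn_codeOf, word_encode]
      exact histN_isPrefixOf _ _
    · rw [wk_codeOf, word_encode, length_histN, ← histN_bpair]
      have := (hm _ _ hvv').length_le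
      omega
  · intro i hi
    rw [wn_codeOf] at hi
    rw [wk_codeOf]
    have hx : word i = histN x (word i).length := hi
    have heq : interL (histN a (word i).length) (word i)
        = histN (bpair a x) (2 * (word i).length) := by
      rw [histN_bpair, ← hx]
    rw [heq]
    exact h1 _ (histN_isPrefixOf _ _)

def smnW (h : List ℕ → List ℕ) (v : List ℕ) : List ℕ :=
  (List.range (mBound v.length)).map
    (fun i => cpair i (Encodable.encode (h (interL (myTake (word i).length v) (word i)))))

lemma smnW_length {h v} : (smnW h v).length = mBound v.length := by simp [smnW]

lemma smnW_getD {h v i} (hi : i < mBound v.length) :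
    (smnW h v).getD i 0
      = cpair i (Encodable.encode (h (interL (myTake (word i).length v) (word i)))) :=
  mapRange_getD hi

lemma smnW_entry_eq {h : List ℕ → List ℕ} {v : List ℕ} {a : Baire} {i : ℕ}
    (hv : IsPrefixOf v a) (hi : (word i).length ≤ v.length) :
    cpair i (Encodable.encode (h (interL (myTake (word i).length v) (word i))))
      = codeOf h a i := by
  rw [myTake_eq_histN hv hi]
  rfl

lemma smnW_monotone {h : List ℕ → List ℕ} : MonotoneWord (smnW h) := by
  intro u v huv
  apply prefix_of_getD
  · rw [smnW_length, smnW_length]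
    exact mBound_mono huv.length_le
  · intro i hi
    rw [smnW_length] at hi
    rw [smnW_getD hi, smnW_getD (lt_of_lt_of_le hi (mBound_mono huv.length_le))]
    rw [myTake_congr_prefix huv (mBound_spec i hi)]

lemma smnW_approx {h : List ℕ → List ℕ} :
    Approximates (smnW h) (fun a => Part.some (codeOf h a)) := by
  intro a _
  constructor
  · intro v hv
    rw [isPrefixOf_iff]
    intro i hil
    rw [smnW_length] at hil
    rw [smnW_getD hil, smnW_entry_eq hv (mBound_spec i hil)]
    rfl
  · intro m
    obtain ⟨L0, hL0⟩ := mBound_large (m + 1)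
    refine ⟨histN a L0, histN_isPrefixOf _ _, ?_⟩
    show m < (smnW h (histN a L0)).length
    rw [smnW_length, length_histN]
    have := hL0 L0 (le_refl _)
    omega

open Computable in
lemma smnW_computable {h : List ℕ → List ℕ} (hc : Computable h) : Computable (smnW h) := by
  have hinner : Computable (fun p : List ℕ × ℕ =>
      interL (myTake (word p.2).length p.1) (word p.2)) := by
    exact (primrec_interL.comp
      (primrec_myTake.comp (Primrec.list_length.comp (primrec_word.comp Primrec.snd)) Primrec.fst)
      (primrec_word.comp Primrec.snd)).to_comp
  have hg : Computable₂ (fun (v : List ℕ) (i : ℕ) =>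
      cpair i (Encodable.encode (h (interL (myTake (word i).length v) (word i))))) := by
    exact (primrec_cpair.to_comp.comp Computable.snd
      (Computable.encode.comp (hc.comp hinner))).to₂
  have hmap := computable_mapRange hg
  exact (hmap.comp Computable.id
    ((primrec_mBound.comp Primrec.list_length).to_comp)).of_eq (fun v => rfl)

lemma ct_codeOf {h : List ℕ → List ℕ} (hc : Computable h) : ComputableTotal (codeOf h) :=
  ⟨smnW h, smnW_computable hc, smnW_monotone, smnW_approx⟩

-- codeOf h is itself a computable point for each computable a (needed for c*)
open Computable in
lemma computable_codeOf_point {h : List ℕ → List ℕ} (hc : Computable h) {a : Baire}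
    (hac : Computable a) : Computable (codeOf h a) := by
  have hhist : Computable (fun n : ℕ => histN a n) := by
    have := computable_mapRange (g := fun (_ : ℕ) (n : ℕ) => a n) ((hac.comp Computable.snd).to₂)
    exact this.comp Computable.id Computable.id
  unfold codeOf
  exact primrec_cpair.to_comp.comp Computable.id
    (Computable.encode.comp (hc.comp
      (primrec_interL.to_comp.comp
        (hhist.comp ((Primrec.list_length.comp primrec_word).to_comp))
        (primrec_word.to_comp))))



-- boolean prefix test
def prefB (u l : List ℕ) : Bool := decide (u.length ≤ l.length) && decide (u = myTake u.length l)

lemma prefB_iff {u l : List ℕ} : prefB u l = true ↔ u <+: l := by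
  constructor
  · intro h
    simp only [prefB, Bool.and_eq_true, decide_eq_true_eq] at h
    obtain ⟨h1, h2⟩ := h
    apply prefix_of_getD h1
    intro i hi
    conv_lhs => rw [h2]
    rw [myTake_getD hi]
  · intro h
    simp only [prefB, Bool.and_eq_true, decide_eq_true_eq]
    refine ⟨h.length_le, ?_⟩
    apply List.ext_getElem (by simp [myTake])
    intro i h1 h2
    rw [← List.getD_eq_getElem _ 0 h1, ← List.getD_eq_getElem _ 0 h2,
      myTake_getD (by simpa [myTake] using h2)]
    exact IsPrefix.getD_eq h h1

lemma isPrefixOf_nil (p : Baire) : IsPrefixOf [] p := by simp [IsPrefixOf]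

lemma foldl_ext' {α σ : Type*} {f g : σ → α → σ} {l : List α}
    (h : ∀ s a, a ∈ l → f s a = g s a) (init : σ) : l.foldl f init = l.foldl g init := by
  induction l generalizing init with
  | nil => rfl
  | cons a l ih =>
    simp only [List.foldl_cons]
    rw [h init a (by simp)]
    exact ih (fun s b hb => h s b (by simp [hb])) _

-- generic foldl invariant
lemma foldl_inv {α σ : Type*} {P : σ → Prop} {f : σ → α → σ} {l : List α} {init : σ}
    (h0 : P init) (hstep : ∀ s a, a ∈ l → P s → P (f s a)) : P (l.foldl f init) := by
  induction l generalizing init with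
  | nil => exact h0
  | cons a l ih =>
    exact ih (hstep init a (by simp) h0) (fun s b hb hs => hstep s b (by simp [hb]) hs)

-- ====== universal machine word function ======

def applicB (v : List ℕ) (i : ℕ) : Bool :=
  decide (i < (evensL v).length) &&
    prefB (word (cfun ((evensL v).getD i 0)).1) (oddsL v)

def candW (v : List ℕ) (i : ℕ) : List ℕ := word (cfun ((evensL v).getD i 0)).2

def bestA (v : List ℕ) : List ℕ :=
  (List.range (evensL v).length).foldl
    (fun st i => cond (applicB v i && decide (st.length < (candW v i).length)) (candW v i) st) []

def ustep (v st : List ℕ) : List ℕ := cond (prefB st (bestA v)) (bestA v) st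

def uFun (v : List ℕ) : List ℕ :=
  (List.range v.length).foldl (fun st m => ustep (myTake (m+1) v) st) []

lemma ustep_prefix {v st : List ℕ} : st <+: ustep v st := by
  unfold ustep
  cases h : prefB st (bestA v)
  · simp
  · simp [prefB_iff.1 h]

lemma myTake_full {l : List ℕ} : myTake l.length l = l := by
  apply List.ext_getElem (by simp [myTake])
  intro i h1 h2
  rw [← List.getD_eq_getElem _ 0 h1, ← List.getD_eq_getElem _ 0 h2,
    myTake_getD (by simpa [myTake] using h1)]

lemma uFun_append {v : List ℕ} {a : ℕ} : uFun (v ++ [a]) = ustep (v ++ [a]) (uFun v) := by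
  unfold uFun
  rw [show (v ++ [a]).length = v.length + 1 by simp, List.range_succ, List.foldl_append]
  simp only [List.foldl_cons, List.foldl_nil]
  have h1 : List.foldl (fun st m => ustep (myTake (m+1) (v++[a])) st) [] (List.range v.length)
      = List.foldl (fun st m => ustep (myTake (m+1) v) st) [] (List.range v.length) := by
    apply foldl_ext'
    intro s m hm
    have hmv : m < v.length := by simpa using hm
    rw [myTake_congr_prefix (List.prefix_append v [a]) (by omega)]
  rw [h1, show v.length + 1 = (v ++ [a]).length by simp, myTake_full]

lemma uFun_prefix_append : ∀ (t v : List ℕ), uFun v <+: uFun (v ++ t) := by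
  intro t
  induction t using List.reverseRecOn with
  | nil => intro v; simp
  | append_singleton t a ih =>
    intro v
    rw [← List.append_assoc, uFun_append]
    exact (ih v).trans ustep_prefix

lemma uFun_monotone : MonotoneWord uFun := by
  intro u v h
  obtain ⟨t, rfl⟩ := h
  exact uFun_prefix_append t u

-- semantics
section semantics

variable {r y : Baire}

lemma applic_sound {v : List ℕ} (hv : IsPrefixOf v r) {i : ℕ} (h : applicB v i = true) :
    IsPrefixOf (wn (evens r) i) (odds r) ∧ candW v i = wk (evens r) i := by
  simp only [applicB, Bool.and_eq_true, decide_eq_true_eq] at h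
  obtain ⟨hi, hpre⟩ := h
  have hq : IsPrefixOf (evensL v) (evens r) := evensL_isPrefixOf hv
  have hqi : (evensL v).getD i 0 = evens r i := (isPrefixOf_iff.1 hq) i hi
  have hcf : cfun ((evensL v).getD i 0) = cunpair (evens r i) := by
    rw [hqi, cunpair_eq]
  have hwn : word (cfun ((evensL v).getD i 0)).1 = wn (evens r) i := by rw [hcf]; rfl
  have hwk : candW v i = wk (evens r) i := by unfold candW; rw [hcf]; rfl
  refine ⟨?_, hwk⟩
  rw [← hwn]
  exact IsPrefixOf.mono (prefB_iff.1 hpre) (oddsL_isPrefixOf hv)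

lemma bestA_cases {v : List ℕ} :
    bestA v = [] ∨ ∃ i, applicB v i = true ∧ bestA v = candW v i := by
  unfold bestA
  apply foldl_inv (P := fun st => st = [] ∨ ∃ i, applicB v i = true ∧ st = candW v i)
  · exact Or.inl rfl
  · intro s a _ hs
    cases h : (applicB v a && decide (s.length < (candW v a).length))
    · simpa using hs
    · simp only [Bool.and_eq_true] at h
      exact Or.inr ⟨a, h.1, by simp⟩

lemma bestA_isPrefixOf {v : List ℕ} (hv : IsPrefixOf v r)
    (hy : PhiSpec (evens r) (odds r) y) : IsPrefixOf (bestA v) y := by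
  rcases bestA_cases (v := v) with h | ⟨i, ha, h⟩
  · rw [h]; exact isPrefixOf_nil y
  · rw [h]
    obtain ⟨h1, h2⟩ := applic_sound hv ha
    rw [h2]
    exact hy i h1

lemma bestA_ge {v : List ℕ} {j : ℕ} (hj : applicB v j = true) :
    (candW v j).length ≤ (bestA v).length := by
  unfold bestA
  have hjmem : j ∈ List.range (evensL v).length := by
    simp only [applicB, Bool.and_eq_true, decide_eq_true_eq] at hj
    simp [hj.1]
  have key : ∀ (l : List ℕ) (init : List ℕ),
      (∀ s, s ∈ l → applicB v s = true →
        (candW v s).length ≤ (l.foldl (fun st i =>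
          cond (applicB v i && decide (st.length < (candW v i).length)) (candW v i) st) init).length)
      ∧ init.length ≤ (l.foldl (fun st i =>
          cond (applicB v i && decide (st.length < (candW v i).length)) (candW v i) st) init).length := by
    intro l
    induction l with
    | nil => exact fun init => ⟨fun s hs => by simp at hs, le_refl _⟩
    | cons a l ih =>
      intro init
      simp only [List.foldl_cons]
      set init' := cond (applicB v a && decide (init.length < (candW v a).length)) (candW v a) init with hinit'
      have hstep : init.length ≤ init'.length ∧
          (applicB v a = true → (candW v a).length ≤ init'.length) := by
        rw [hinit']
        cases ha : applicB v a
        · simp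
        · cases hlt : decide (init.length < (candW v a).length)
          · simp only [Bool.and_false, cond_false]
            simp only [decide_eq_false_iff_not, not_lt] at hlt
            exact ⟨le_refl _, fun _ => hlt⟩
          · have hlt' : init.length < (candW v a).length := of_decide_eq_true hlt
            simp only [ha, hlt, Bool.and_self, cond_true]
            exact ⟨by omega, fun _ => le_refl _⟩
      constructor
      · intro s hs hsa
        rcases List.mem_cons.1 hs with rfl | hs'
        · exact le_trans (hstep.2 hsa) (ih init').2
        · exact (ih init').1 s hs' hsa
      · exact le_trans hstep.1 (ih init').2
  exact (key _ []).1 j hjmem hj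

lemma uFun_isPrefixOf {v : List ℕ} (hv : IsPrefixOf v r)
    (hy : PhiSpec (evens r) (odds r) y) : IsPrefixOf (uFun v) y := by
  unfold uFun
  apply foldl_inv (P := fun st => IsPrefixOf st y)
  · exact isPrefixOf_nil y
  · intro s m hm hs
    have hmv : m < v.length := by simpa using hm
    have htake : IsPrefixOf (myTake (m+1) v) r := by
      rw [myTake_eq_histN hv (by omega)]
      exact histN_isPrefixOf r (m+1)
    unfold ustep
    cases h : prefB s (bestA (myTake (m+1) v))
    · simpa using hs
    · simpa using bestA_isPrefixOf htake hy

lemma histN_succ {p : Baire} {n : ℕ} : histN p (n+1) = histN p n ++ [p n] := by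
  simp [histN, List.range_succ]

lemma uFun_unbounded (hdom : PhiDomP (evens r) (odds r))
    (hy : PhiSpec (evens r) (odds r) y) (m : ℕ) :
    ∃ v, IsPrefixOf v r ∧ m < (uFun v).length := by
  obtain ⟨i, hi, hil⟩ := hdom.2 m
  set N : ℕ := 2 * max (i+1) (wn (evens r) i).length + 1 with hN
  set v : List ℕ := histN r (N + 1) with hv
  have hvpre : IsPrefixOf v r := histN_isPrefixOf _ _
  have hvlen : v.length = N + 1 := length_histN _ _
  -- applicability of i in v
  have happ : applicB v i = true := by
    have hql : (evensL v).length = (N + 2) / 2 := by rw [evensL_length, hvlen]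
    have hqi : i < (evensL v).length := by rw [hql]; omega
    have hol : (oddsL v).length = (N+1) / 2 := by rw [oddsL_length, hvlen]
    have hq : IsPrefixOf (evensL v) (evens r) := evensL_isPrefixOf hvpre
    have hgd : (evensL v).getD i 0 = evens r i := (isPrefixOf_iff.1 hq) i hqi
    have hcf : word (cfun ((evensL v).getD i 0)).1 = wn (evens r) i := by
      rw [hgd, ← cunpair_eq]; rfl
    simp only [applicB, Bool.and_eq_true, decide_eq_true_eq]
    refine ⟨hqi, ?_⟩
    rw [hcf, prefB_iff]
    have hlen : (wn (evens r) i).length ≤ (oddsL v).length := by rw [hol]; omega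
    exact prefix_of_isPrefixOf hi (oddsL_isPrefixOf hvpre) hlen
  have hcand : candW v i = wk (evens r) i := (applic_sound hvpre happ).2
  have hbest : m < (bestA v).length := by
    have := bestA_ge happ
    rw [hcand] at this
    omega
  refine ⟨v, hvpre, ?_⟩
  have hsplit : v = histN r N ++ [r N] := histN_succ
  have : uFun v = ustep v (uFun (histN r N)) := by
    conv_lhs => rw [hsplit]
    rw [uFun_append, ← hsplit]
  rw [this]
  unfold ustep
  cases h : prefB (uFun (histN r N)) (bestA v)
  · -- not a prefix; but both are prefixes of y, so bestA v <+: uFun _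
    have h1 : IsPrefixOf (uFun (histN r N)) y := uFun_isPrefixOf (histN_isPrefixOf r N) hy
    have h2 : IsPrefixOf (bestA v) y := bestA_isPrefixOf hvpre hy
    have hcomp := wordComparable_of_isPrefixOf h1 h2
    rcases hcomp with hc | hc
    · rw [← prefB_iff] at hc
      rw [h] at hc
      exact absurd hc (by simp)
    · have := hc.length_le
      simpa using (by omega : m < (uFun (histN r N)).length)
  · simpa using hbest

end semantics

-- computability of uFun
open Primrec in
lemma primrec_prefB : Primrec₂ prefB := by
  unfold prefB
  have h1 : PrimrecRel (fun (u l : List ℕ) => u.length ≤ l.length) :=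
    PrimrecRel.comp nat_le (list_length.comp fst) (list_length.comp snd)
  have h2 : PrimrecRel (fun (u l : List ℕ) => u = myTake u.length l) :=
    PrimrecRel.comp Primrec.eq fst (primrec_myTake.comp (list_length.comp fst) snd)
  exact (Primrec.dom_bool₂ (· && ·)).comp (PrimrecRel.decide h1) (PrimrecRel.decide h2)

open Primrec in
lemma primrec_applicB : Primrec₂ applicB := by
  unfold applicB
  have h1 : PrimrecRel (fun (v : List ℕ) (i : ℕ) => i < (evensL v).length) :=
    PrimrecRel.comp nat_lt snd (list_length.comp (primrec_evensL.comp fst))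
  have h2 : Primrec₂ (fun (v : List ℕ) (i : ℕ) =>
      prefB (word (cfun ((evensL v).getD i 0)).1) (oddsL v)) :=
    primrec_prefB.comp
      (primrec_word.comp (fst.comp (primrec_cfun.comp
        (primrec_getD0.comp (primrec_evensL.comp fst) snd))))
      (primrec_oddsL.comp fst)
  exact (Primrec.dom_bool₂ (· && ·)).comp (PrimrecRel.decide h1) h2

open Primrec in
lemma primrec_candW : Primrec₂ candW := by
  unfold candW
  exact (primrec_word.comp (snd.comp (primrec_cfun.comp
    (primrec_getD0.comp (primrec_evensL.comp fst) snd)))).to₂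

open Primrec in
lemma primrec_bestA : Primrec bestA := by
  unfold bestA
  apply Primrec.list_foldl
    (f := fun v : List ℕ => List.range (evensL v).length)
    (g := fun _ : List ℕ => ([] : List ℕ))
    (h := fun v (p : List ℕ × ℕ) =>
      cond (applicB v p.2 && decide (p.1.length < (candW v p.2).length)) (candW v p.2) p.1)
  · exact list_range.comp (list_length.comp primrec_evensL)
  · exact const []
  · apply Primrec.cond
    · exact (Primrec.dom_bool₂ (· && ·)).comp
        (primrec_applicB.comp fst (snd.comp snd))
        (PrimrecPred.decide (PrimrecRel.comp nat_lt (list_length.comp (fst.comp snd))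
          (list_length.comp (primrec_candW.comp fst (snd.comp snd)))))
    · exact primrec_candW.comp fst (snd.comp snd)
    · exact fst.comp snd

open Primrec in
lemma primrec_ustep : Primrec₂ ustep := by
  unfold ustep
  apply Primrec.cond
  · exact primrec_prefB.comp snd (primrec_bestA.comp fst)
  · exact primrec_bestA.comp fst
  · exact snd

open Primrec in
lemma primrec_uFun : Primrec uFun := by
  unfold uFun
  apply Primrec.list_foldl
    (f := fun v : List ℕ => List.range v.length)
    (g := fun _ : List ℕ => ([] : List ℕ))
    (h := fun v (p : List ℕ × ℕ) => ustep (myTake (p.2+1) v) p.1)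
  · exact list_range.comp list_length
  · exact const []
  · exact primrec_ustep.comp (primrec_myTake.comp (succ.comp (snd.comp snd)) fst) (fst.comp snd)

lemma computablePF_U : ComputablePF U := by
  refine ⟨uFun, primrec_uFun.to_comp, uFun_monotone, ?_⟩
  intro r hd
  have hdom : PhiDomP (evens r) (odds r) := hd
  have hy : PhiSpec (evens r) (odds r) ((U r).get hd) := Phi_get_spec hd
  exact ⟨fun v hv => uFun_isPrefixOf hv hy, uFun_unbounded hdom hy⟩



open scoped Classical

def e0 : ℕ := Encodable.encode ([] : List ℕ)

lemma word_e0 : word e0 = [] := word_encode []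

noncomputable def transF (r : Baire) : Baire := fun i =>
  if IsPrefixOf (wn (evens r) i) (odds r)
  then cpair e0 (cunpair (evens r i)).2
  else cpair e0 e0

lemma wn_transF {r : Baire} {i : ℕ} : wn (transF r) i = [] := by
  unfold wn transF
  split <;> simp [cunpair_cpair, word_e0]

lemma wk_transF_pos {r : Baire} {i : ℕ} (h : IsPrefixOf (wn (evens r) i) (odds r)) :
    wk (transF r) i = wk (evens r) i := by
  unfold wk transF
  rw [if_pos h, cunpair_cpair]

lemma wk_transF_neg {r : Baire} {i : ℕ} (h : ¬ IsPrefixOf (wn (evens r) i) (odds r)) :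
    wk (transF r) i = [] := by
  unfold wk transF
  rw [if_neg h, cunpair_cpair]
  exact word_e0

lemma transF_phi {r y : Baire} (hy : y ∈ U r) (x : Baire) : y ∈ Phi (transF r) x := by
  rw [mem_U_iff] at hy
  obtain ⟨⟨hcons, hunb⟩, hspec⟩ := hy
  rw [mem_Phi_iff]
  refine ⟨⟨?_, ?_⟩, ?_⟩
  · -- consistency
    intro i j _
    by_cases hi : IsPrefixOf (wn (evens r) i) (odds r)
    · by_cases hj : IsPrefixOf (wn (evens r) j) (odds r)
      · rw [wk_transF_pos hi, wk_transF_pos hj]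
        exact hcons i j (wordComparable_of_isPrefixOf hi hj)
      · rw [wk_transF_neg hj]
        exact Or.inr (List.nil_prefix)
    · rw [wk_transF_neg hi]
      exact Or.inl (List.nil_prefix)
  · -- unbounded
    intro m
    obtain ⟨i, hip, hil⟩ := hunb m
    refine ⟨i, ?_, ?_⟩
    · rw [wn_transF]; exact isPrefixOf_nil x
    · rw [wk_transF_pos hip]; exact hil
  · -- spec
    intro i _
    by_cases hi : IsPrefixOf (wn (evens r) i) (odds r)
    · rw [wk_transF_pos hi]; exact hspec i hi
    · rw [wk_transF_neg hi]; exact isPrefixOf_nil y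

-- ====== computability of transF ======

def tOkB (v : List ℕ) (m : ℕ) : Bool := (List.range m).all (fun i =>
  decide (i < (evensL v).length) &&
    decide ((word (cfun ((evensL v).getD i 0)).1).length ≤ (oddsL v).length))

lemma tOkB_iff {v m} : tOkB v m = true ↔ ∀ i < m, i < (evensL v).length ∧
    (word (cfun ((evensL v).getD i 0)).1).length ≤ (oddsL v).length := by
  simp [tOkB, List.all_eq_true]

def tBound (v : List ℕ) : ℕ := Nat.findGreatest (fun m => tOkB v m = true) v.length

lemma tBound_spec {v : List ℕ} : ∀ i < tBound v, i < (evensL v).length ∧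
    (word (cfun ((evensL v).getD i 0)).1).length ≤ (oddsL v).length := by
  have h : tOkB v (tBound v) = true :=
    Nat.findGreatest_spec (P := fun m => tOkB v m = true) (m := 0) (by omega) (by simp [tOkB])
  exact tOkB_iff.1 h

lemma tBound_le {v : List ℕ} : tBound v ≤ v.length := Nat.findGreatest_le _

lemma tBound_mono {u v : List ℕ} (h : u <+: v) : tBound u ≤ tBound v := by
  apply Nat.le_findGreatest (le_trans tBound_le h.length_le)
  rw [tOkB_iff]
  intro i hi
  obtain ⟨h1, h2⟩ := tBound_spec i hi
  have hle := (evensL_mono h).length_le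
  have holen := (oddsL_mono h).length_le
  have hgd : (evensL u).getD i 0 = (evensL v).getD i 0 := IsPrefix.getD_eq (evensL_mono h) h1
  rw [← hgd]
  exact ⟨by omega, by omega⟩

lemma exists_fun_bound (g : ℕ → ℕ) (M : ℕ) : ∃ C, ∀ i < M, g i ≤ C := by
  induction M with
  | zero => exact ⟨0, by omega⟩
  | succ M ih =>
    obtain ⟨C, hC⟩ := ih
    refine ⟨max C (g M), fun i hi => ?_⟩
    rcases Nat.lt_or_ge i M with h | h
    · exact le_trans (hC i h) (le_max_left _ _)
    · have : i = M := by omega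
      subst this
      exact le_max_right _ _

lemma tBound_large (r : Baire) (M : ℕ) : ∃ N, ∀ n, N ≤ n → M ≤ tBound (histN r n) := by
  obtain ⟨C, hC⟩ := exists_fun_bound (fun i => (wn (evens r) i).length) M
  refine ⟨2 * max M C + 2, fun n hn => ?_⟩
  apply Nat.le_findGreatest (by rw [length_histN]; omega)
  rw [tOkB_iff]
  intro i hi
  set v := histN r n with hv
  have hvpre : IsPrefixOf v r := histN_isPrefixOf _ _
  have hql : (evensL v).length = (n+1)/2 := by rw [evensL_length, length_histN]
  have hol : (oddsL v).length = n/2 := by rw [oddsL_length, length_histN]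
  have h1 : i < (evensL v).length := by rw [hql]; omega
  refine ⟨h1, ?_⟩
  have hgd : (evensL v).getD i 0 = evens r i :=
    (isPrefixOf_iff.1 (evensL_isPrefixOf hvpre)) i h1
  have hw : word (cfun ((evensL v).getD i 0)).1 = wn (evens r) i := by
    rw [hgd, ← cunpair_eq]; rfl
  rw [hw, hol]
  have := hC i hi
  omega

def transW (v : List ℕ) : List ℕ := (List.range (tBound v)).map (fun i =>
  cond (applicB v i) (cpair e0 (cfun ((evensL v).getD i 0)).2) (cpair e0 e0))

lemma transW_length {v} : (transW v).length = tBound v := by simp [transW]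

lemma applicB_iff_of_bound {v : List ℕ} {r : Baire} (hv : IsPrefixOf v r) {i : ℕ}
    (h1 : i < (evensL v).length)
    (h2 : (word (cfun ((evensL v).getD i 0)).1).length ≤ (oddsL v).length) :
    (applicB v i = true) ↔ IsPrefixOf (wn (evens r) i) (odds r) := by
  constructor
  · exact fun h => (applic_sound hv h).1
  · intro h
    have hgd : (evensL v).getD i 0 = evens r i :=
      (isPrefixOf_iff.1 (evensL_isPrefixOf hv)) i h1
    have hw : word (cfun ((evensL v).getD i 0)).1 = wn (evens r) i := by
      rw [hgd, ← cunpair_eq]; rfl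
    simp only [applicB, Bool.and_eq_true, decide_eq_true_eq]
    refine ⟨h1, ?_⟩
    rw [hw, prefB_iff]
    rw [hw] at h2
    exact prefix_of_isPrefixOf h (oddsL_isPrefixOf hv) h2

lemma transW_entry {v : List ℕ} {r : Baire} (hv : IsPrefixOf v r) {i : ℕ}
    (hi : i < tBound v) :
    (cond (applicB v i) (cpair e0 (cfun ((evensL v).getD i 0)).2) (cpair e0 e0)) = transF r i := by
  obtain ⟨h1, h2⟩ := tBound_spec i hi
  have hgd : (evensL v).getD i 0 = evens r i :=
    (isPrefixOf_iff.1 (evensL_isPrefixOf hv)) i h1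
  have hiff := applicB_iff_of_bound hv h1 h2
  unfold transF
  by_cases hp : IsPrefixOf (wn (evens r) i) (odds r)
  · rw [if_pos hp, hiff.2 hp, cond_true, hgd, cunpair_eq]
  · rw [if_neg hp]
    cases ha : applicB v i
    · rfl
    · exact absurd (hiff.1 ha) hp

lemma transW_monotone : MonotoneWord transW := by
  intro u v h
  apply prefix_of_getD
  · rw [transW_length, transW_length]; exact tBound_mono h
  · intro i hi
    rw [transW_length] at hi
    have hiv : i < tBound v := lt_of_lt_of_le hi (tBound_mono h)
    unfold transW
    rw [mapRange_getD hi, mapRange_getD hiv]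
    obtain ⟨h1, h2⟩ := tBound_spec (v := u) i hi
    have hgd : (evensL u).getD i 0 = (evensL v).getD i 0 := IsPrefix.getD_eq (evensL_mono h) h1
    have happ : applicB u i = applicB v i := by
      simp only [applicB]
      rw [hgd]
      congr 1
      · have h1' : i < (evensL v).length := by
          have := (evensL_mono h).length_le; omega
        simp [h1, h1']
      · unfold prefB
        rw [← hgd]
        have holen := (oddsL_mono h).length_le
        congr 1
        · simp only [decide_eq_decide]
          omega
        · rw [myTake_congr_prefix (oddsL_mono h) h2]
    rw [happ, hgd]

lemma transW_approx : Approximates transW (fun r => Part.some (transF r)) := by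
  intro r _
  constructor
  · intro v hv
    rw [isPrefixOf_iff]
    intro i hi
    rw [transW_length] at hi
    show (transW v).getD i 0 = transF r i
    unfold transW
    rw [mapRange_getD hi]
    exact transW_entry hv hi
  · intro m
    obtain ⟨N, hN⟩ := tBound_large r (m+1)
    refine ⟨histN r N, histN_isPrefixOf _ _, ?_⟩
    rw [transW_length]
    have := hN N (le_refl _)
    omega

open Primrec in
lemma primrec_tOkB : Primrec₂ tOkB := by
  have hstep : Primrec₂ (fun (p : List ℕ × ℕ) (q : ℕ × Bool) =>
      ((decide (q.1 < (evensL p.1).length) &&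
        decide ((word (cfun ((evensL p.1).getD q.1 0)).1).length ≤ (oddsL p.1).length)) && q.2 : Bool)) := by
    have hA : Primrec (fun (x : (List ℕ × ℕ) × ℕ × Bool) =>
        (decide (x.2.1 < (evensL x.1.1).length) : Bool)) :=
      PrimrecPred.decide (PrimrecRel.comp nat_lt (fst.comp snd) (list_length.comp (primrec_evensL.comp (fst.comp fst))))
    have hB : Primrec (fun (x : (List ℕ × ℕ) × ℕ × Bool) =>
        (decide ((word (cfun ((evensL x.1.1).getD x.2.1 0)).1).length ≤ (oddsL x.1.1).length) : Bool)) :=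
      PrimrecPred.decide (PrimrecRel.comp nat_le
        (list_length.comp (primrec_word.comp (fst.comp (primrec_cfun.comp
          (primrec_getD0.comp (primrec_evensL.comp (fst.comp fst)) (fst.comp snd))))))
        (list_length.comp (primrec_oddsL.comp (fst.comp fst))))
    exact (Primrec.dom_bool₂ (· && ·)).comp
      ((Primrec.dom_bool₂ (· && ·)).comp hA hB) (snd.comp snd)
  have h : Primrec (fun p : List ℕ × ℕ =>
      (List.range p.2).foldr (fun i b =>
        ((decide (i < (evensL p.1).length) &&
          decide ((word (cfun ((evensL p.1).getD i 0)).1).length ≤ (oddsL p.1).length)) && b : Bool)) true) :=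
    Primrec.list_foldr (list_range.comp snd) (const true) hstep
  refine h.of_eq (fun p => ?_)
  show _ = tOkB p.1 p.2
  unfold tOkB
  generalize (List.range p.2) = l
  induction l with
  | nil => rfl
  | cons x l ih => rw [List.foldr_cons, List.all_cons, ih]

open Primrec in
lemma primrec_tBound : Primrec tBound := by
  have hrel : PrimrecRel (fun (v : List ℕ) (m : ℕ) => tOkB v m = true) :=
    Primrec₂.primrecRel (Primrec.of_eq primrec_tOkB (fun p => by simp))
  exact Primrec.nat_findGreatest list_length hrel

open Primrec in
lemma primrec_transW : Primrec transW := by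
  unfold transW
  apply Primrec.list_map (list_range.comp primrec_tBound)
  apply Primrec.cond (primrec_applicB.comp fst snd)
  · exact primrec_cpair.comp (const e0)
      (snd.comp (primrec_cfun.comp (primrec_getD0.comp (primrec_evensL.comp fst) snd)))
  · exact const (cpair e0 e0)

lemma ct_transF : ComputableTotal transF :=
  ⟨transW, primrec_transW.to_comp, transW_monotone, transW_approx⟩

-- ====== CD → sW ======

lemma mem_DIS_iff {p q : Baire} : q ∈ DIS p ↔ q ∉ U p := Iff.rfl

lemma cd_to_sW {f : Problem} (hcd : ComputablyDiscontinuous f) : StrongWeihrauchRed DIS f := by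
  obtain ⟨D, hDc, hDd⟩ := hcd
  refine ⟨fun t => Part.some t, fun r => Part.some (D (transF r)),
    ⟨id, Computable.id, fun u v h => h, ?_⟩, ?_, ?_⟩
  · intro p _
    constructor
    · intro v hv; exact hv
    · intro m; exact ⟨histN p (m+1), histN_isPrefixOf p (m+1), by simp [histN]⟩
  · exact ComputableTotal.comp hDc ct_transF
  · intro G hG p _
    have hfne : (f (D (transF p))).Nonempty := (hDd (transF p)).1
    obtain ⟨hGdom, hGmem⟩ := hG (D (transF p)) hfne
    set t := (G (D (transF p))).get hGdom with ht
    have htmem : t ∈ (Part.some (D (transF p))).bind fun s => (G s).bind fun t => Part.some t := by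
      rw [Part.bind_some]
      rw [Part.mem_bind_iff]
      exact ⟨t, Part.get_mem hGdom, Part.mem_some t⟩
    obtain ⟨hd, hget⟩ := htmem
    refine ⟨hd, ?_⟩
    rw [hget]
    rw [mem_DIS_iff]
    intro hUt
    exact (hDd (transF p)).2 t (transF_phi hUt (D (transF p))) hGmem

-- ====== sW → W ======

lemma sW_to_W {f g : Problem} (h : StrongWeihrauchRed f g) : WeihrauchRed f g := by
  obtain ⟨H, K, hH, hK, hreal⟩ := h
  refine ⟨fun r => H (odds r), K, ComputablePF.precompTotal hH ct_odds, hK, ?_⟩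
  intro G hG
  have hre := hreal G hG
  intro p hp
  have heq : ((K p).bind fun s => (G s).bind fun t => H (odds (bpair p t)))
      = ((K p).bind fun s => (G s).bind fun t => H t) := by
    congr 1
    funext s
    congr 1
    funext t
    rw [odds_bpair]
  obtain ⟨hd, hv⟩ := hre p hp
  have hmem : ((K p).bind fun s => (G s).bind fun t => H t).get hd
      ∈ ((K p).bind fun s => (G s).bind fun t => H (odds (bpair p t))) := by
    rw [heq]; exact Part.get_mem hd
  obtain ⟨hd', hget'⟩ := hmem
  exact ⟨hd', by rw [hget']; exact hv⟩



open scoped Classical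

-- the composite functional R
def Rfun (H K : Baire →. Baire) : Baire →. Baire := fun p =>
  ((((K p).map (fun s => bpair (odds p) s)).bind U).map (fun t => bpair p t)).bind H

lemma mem_Rfun_intro {H K : Baire →. Baire} {p s t v : Baire}
    (hs : s ∈ K p) (ht : t ∈ U (bpair (odds p) s)) (hv : v ∈ H (bpair p t)) :
    v ∈ Rfun H K p := by
  unfold Rfun
  refine Part.mem_bind_iff.mpr ?_
  refine ⟨bpair p t, ?_, hv⟩
  rw [Part.mem_map_iff]
  refine ⟨t, ?_, rfl⟩
  refine Part.mem_bind_iff.mpr ?_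
  refine ⟨bpair (odds p) s, ?_, ht⟩
  rw [Part.mem_map_iff]
  exact ⟨s, hs, rfl⟩

lemma computablePF_Rfun {H K : Baire →. Baire} (hH : ComputablePF H) (hK : ComputablePF K) :
    ComputablePF (Rfun H K) := by
  unfold Rfun
  exact ComputablePF.bindPF
    (ComputablePF.mapPairRight
      (ComputablePF.bindPF (ComputablePF.mapPairRight hK ct_odds) computablePF_U)
      ct_id) hH

-- the self-application functional A
def Afun : Baire →. Baire := fun z =>
  ((U (bpair (evens z) (evens z))).map (fun c => bpair c (odds z))).bind U

lemma mem_Afun_intro {a x c y : Baire} (hc : c ∈ Phi a a) (hy : y ∈ Phi c x) :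
    y ∈ Afun (bpair a x) := by
  unfold Afun
  refine Part.mem_bind_iff.mpr ?_
  refine ⟨bpair c x, ?_, ?_⟩
  · rw [Part.mem_map_iff]
    refine ⟨c, ?_, ?_⟩
    · rw [evens_bpair, U_bpair]; exact hc
    · rw [odds_bpair]
  · rw [U_bpair]; exact hy

lemma computablePF_Afun : ComputablePF Afun := by
  unfold Afun
  exact ComputablePF.bindPF
    (ComputablePF.mapPairLeft
      (ComputablePF.precompTotal computablePF_U (ct_bpair ct_evens ct_evens))
      ct_odds) computablePF_U

-- ====== the fixed point ======

section fixedpoint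

variable {H K : Baire →. Baire}

/-- The data of a fixed code `c*` with `R (bpair c* x) ⊆ Phi c* x`. -/
lemma exists_fixed_code (hH : ComputablePF H) (hK : ComputablePF K) :
    ∃ cstar : Baire, Computable (cstar : ℕ → ℕ) ∧
      ∀ x v : Baire, v ∈ Rfun H K (bpair cstar x) → v ∈ Phi cstar x := by
  obtain ⟨hA, hAcomp, hAmono, hAapprox⟩ := computablePF_Afun
  have hRc := computablePF_Rfun hH hK
  -- V z = R (bpair (codeOf hA (evens z)) (odds z))
  have hVc : ComputablePF (fun z => Rfun H K (bpair (codeOf hA (evens z)) (odds z))) :=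
    ComputablePF.precompTotal hRc
      (ct_bpair (ComputableTotal.comp (ct_codeOf hAcomp) ct_evens) ct_odds)
  obtain ⟨hV, hVcomp, hVmono, hVapprox⟩ := hVc
  -- W0 z = some (codeOf hV (odds z))
  have hW0c : ComputableTotal (fun z => codeOf hV (odds z)) :=
    ComputableTotal.comp (ct_codeOf hVcomp) ct_odds
  obtain ⟨hW, hWcomp, hWmono, hWapprox⟩ := hW0c
  set astar : Baire := codeOf hW (fun _ => 0) with hastar
  set cstar : Baire := codeOf hA astar with hcstar
  have hWspec : ∀ x : Baire, codeOf hV x ∈ Phi astar x := by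
    intro x
    apply codeOf_spec hWmono hWapprox
    show codeOf hV x ∈ Part.some (codeOf hV (odds (bpair (fun _ => 0) x)))
    rw [odds_bpair]
    exact Part.mem_some _
  have hcomp : Computable (cstar : ℕ → ℕ) := by
    apply computable_codeOf_point hAcomp
    apply computable_codeOf_point hWcomp
    exact Computable.const 0
  refine ⟨cstar, hcomp, ?_⟩
  intro x v hv
  -- v ∈ V (bpair astar x)
  have hv1 : v ∈ (fun z => Rfun H K (bpair (codeOf hA (evens z)) (odds z))) (bpair astar x) := by
    show v ∈ Rfun H K (bpair (codeOf hA (evens (bpair astar x))) (odds (bpair astar x)))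
    rw [evens_bpair, odds_bpair]
    exact hv
  have hv2 : v ∈ Phi (codeOf hV astar) x := codeOf_spec hVmono hVapprox hv1
  have hv3 : v ∈ Afun (bpair astar x) := mem_Afun_intro (hWspec astar) hv2
  exact codeOf_spec hAmono hAapprox hv3

end fixedpoint

-- ====== W → CD ======

lemma w_to_cd {f : Problem} (hW : WeihrauchRed DIS f) : ComputablyDiscontinuous f := by
  obtain ⟨H, K, hH, hK, hred⟩ := hW
  -- Step A : K is total on all inputs, with f-nonempty values
  have hKdom : ∀ p : Baire, ∃ h : (K p).Dom, (f ((K p).get h)).Nonempty := by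
    intro p
    set G0 : Baire →. Baire := fun s => ⟨(f s).Nonempty, fun h => h.some⟩ with hG0
    have hG0real : Realizes G0 f := by
      intro s hs
      exact ⟨hs, Set.Nonempty.some_mem hs⟩
    have hcomp := hred G0 hG0real
    obtain ⟨y, hy⟩ := DIS_aux_nonempty p
    obtain ⟨hd, _⟩ := hcomp p ⟨y, hy⟩
    have hmem := Part.get_mem hd
    rw [Part.mem_bind_iff] at hmem
    obtain ⟨s, hsK, hrest⟩ := hmem
    rw [Part.mem_bind_iff] at hrest
    obtain ⟨t, htG, _⟩ := hrest
    obtain ⟨hdom2, _⟩ := htG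
    obtain ⟨hKd, hKget⟩ := hsK
    exact ⟨hKd, by rw [hKget]; exact hdom2⟩
  obtain ⟨cstar, hcstar_comp, hcstar_spec⟩ := exists_fixed_code hH hK
  set D0 : Baire → Baire := fun q => (K (bpair cstar q)).get (hKdom (bpair cstar q)).choose
    with hD0
  have hD0c : ComputableTotal D0 := by
    have h1 : ComputablePF (fun q => K (bpair cstar q)) :=
      ComputablePF.precompTotal hK (ct_bpair (ct_const hcstar_comp) ct_id)
    exact computablePF_congr (fun q => (Part.some_get _).symm) h1
  refine ⟨D0, hD0c, ?_⟩
  intro q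
  constructor
  · exact (hKdom (bpair cstar q)).choose_spec
  · intro y hyPhi hymem
    -- build the rogue realizer G1
    set G1 : Baire →. Baire := fun s =>
      if s = D0 q then Part.some y else ⟨(f s).Nonempty, fun h => h.some⟩ with hG1
    have hG1real : Realizes G1 f := by
      intro s hs
      by_cases he : s = D0 q
      · have h1 : G1 s = Part.some y := if_pos he
        rw [h1]
        exact ⟨trivial, by subst he; exact hymem⟩
      · have : G1 s = ⟨(f s).Nonempty, fun h => h.some⟩ := if_neg he
        rw [this]
        exact ⟨hs, Set.Nonempty.some_mem hs⟩
    have hcomp := hred G1 hG1real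
    set p : Baire := bpair cstar q with hp
    obtain ⟨y0, hy0⟩ := DIS_aux_nonempty p
    obtain ⟨hd, hval⟩ := hcomp p ⟨y0, hy0⟩
    set v := ((K p).bind fun s => (G1 s).bind fun t => H (bpair p t)).get hd with hvdef
    have hvnot : v ∉ U p := hval
    apply hvnot
    -- unfold the composite value
    have hm := Part.get_mem hd
    rw [Part.mem_bind_iff] at hm
    obtain ⟨s, hsK, hrest⟩ := hm
    rw [Part.mem_bind_iff] at hrest
    obtain ⟨t, htG, hvH⟩ := hrest
    have hsD : s = D0 q := by
      rw [hD0]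
      exact (Part.get_eq_of_mem hsK _).symm
    have htY : t = y := by
      rw [hsD] at htG
      have : G1 (D0 q) = Part.some y := if_pos rfl
      rw [this] at htG
      exact Part.mem_some_iff.1 htG
    -- v ∈ R p hence v ∈ Phi cstar q = U p
    have hyU : y ∈ U (bpair (odds p) s) := by
      rw [hp, odds_bpair, hsD, U_bpair]
      exact hyPhi
    have hvR : v ∈ Rfun H K p := by
      apply mem_Rfun_intro hsK (t := y) hyU
      rw [← htY]
      exact hvH
    have := hcstar_spec q v (by rw [← hp]; exact hvR)
    rw [hp, U_bpair]
    exact this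


end

/-- `DIS ≤_W f ⟺ DIS ≤_sW f ⟺ f` is computably discontinuous. -/
theorem DIS_red_iff_computably_discontinuous (f : Problem) :
    (WeihrauchRed DIS f ↔ ComputablyDiscontinuous f) ∧
    (StrongWeihrauchRed DIS f ↔ ComputablyDiscontinuous f) :=
  ⟨⟨w_to_cd, fun h => sW_to_W (cd_to_sW h)⟩,
   ⟨fun h => w_to_cd (sW_to_W h), cd_to_sW⟩⟩
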